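/- arXiv:1301.1094 — 5 statements merged into one kernel-verified Lean document; each statement's English description precedes it below -/
import Mathlib

section
/- If |φ⟩ is a class state, i.e. the function f(g) := ⟨φ|U_g|φ⟩ satisfies f(h⁻¹gh) = f(g) for all g, h ∈ G, then the connectedness relation of the confusability graph is also right-invariant: g ∼ g' implies gh ∼ g'h for all h ∈ G. -/
open scoped InnerProductSpace

/-- For a class state (`f(g) = ⟪φ, U_g φ⟫` is a class function), the connectedness
relation of the confusability graph is right-invariant: g ∼ g' implies gh ∼ g'h. -/
theorem confusability_connected_right_invariant_of_class_state
    {G : Type*} [Group G] {H : Type*} [NormedAddCommGroup H] [InnerProductSpace ℂ H]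
    (U : G →* (H ≃ₗᵢ[ℂ] H)) (φ : H) (hφ : ‖φ‖ = 1)
    (hclass : ∀ g h : G, ⟪φ, U (h⁻¹ * g * h) φ⟫_ℂ = ⟪φ, U g φ⟫_ℂ)
    (Conn : G → G → Prop)
    (hConn : Conn = Relation.ReflTransGen (fun g h : G => ⟪U g φ, U h φ⟫_ℂ ≠ 0))
    (g g' : G) (hgg' : Conn g g') (h : G) :
    Conn (g * h) (g' * h) := by
  subst hConn
  have key : ∀ a b : G, ⟪U a φ, U b φ⟫_ℂ = ⟪φ, U (a⁻¹ * b) φ⟫_ℂ := by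
    intro a b
    have : ⟪U a φ, U b φ⟫_ℂ = ⟪U a⁻¹ (U a φ), U a⁻¹ (U b φ)⟫_ℂ :=
      ((U a⁻¹).inner_map_map _ _).symm
    rw [this]
    have h1 : U a⁻¹ (U a φ) = φ := by
      have : (U a⁻¹ * U a) φ = U (a⁻¹ * a) φ := by rw [map_mul]
      simpa using this.symm
    have h2 : U a⁻¹ (U b φ) = U (a⁻¹ * b) φ := by
      have : (U a⁻¹ * U b) φ = U (a⁻¹ * b) φ := by rw [map_mul]
      simpa using this
    rw [h1, h2]
  have adj : ∀ a b : G, ⟪U a φ, U b φ⟫_ℂ ≠ 0 → ⟪U (a * h) φ, U (b * h) φ⟫_ℂ ≠ 0 := by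
    intro a b hab
    rw [key] at hab ⊢
    have : (a * h)⁻¹ * (b * h) = h⁻¹ * (a⁻¹ * b) * h := by group
    rw [this, hclass]
    exact hab
  induction hgg' with
  | refl => exact Relation.ReflTransGen.refl
  | tail _ hbc ih => exact ih.tail (adj _ _ hbc)
end

section
/- If |φ⟩ is a class state (f(g) := ⟨φ|U_g|φ⟩ is a class function), then the connected component of the identity H = { h ∈ G : h ∼ e } is a normal subgroup of G. -/
open scoped InnerProductSpace

/-!
The overlap `⟪U g φ, U h φ⟫` depends only on `g⁻¹ * h`, so the confusability relation is
invariant under left translation, and for a class state also under conjugation. Left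
invariance alone makes the component of `1` a subgroup: if `a ∼ 1` and `b ∼ 1` then
`a * b ∼ a ∼ 1` and `1 = a⁻¹ * a ∼ a⁻¹`. Conjugation invariance makes it normal.
-/

namespace Relation

variable {G : Type*} [Group G] (R : G → G → Prop) [Std.Symm R]

def identityComponent (hR : ∀ k g h, R g h → R (k * g) (k * h)) : Subgroup G where
  carrier := {g | ReflTransGen R g 1}
  one_mem' := .refl
  mul_mem' {a b} ha hb := by
    have hab : ReflTransGen R (a * b) (a * 1) := ReflTransGen.lift _ (hR a) _ _ hb
    exact (mul_one a ▸ hab).trans ha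
  inv_mem' {a} ha := by
    have h : ReflTransGen R (a⁻¹ * a) (a⁻¹ * 1) := ReflTransGen.lift _ (hR a⁻¹) _ _ ha
    rw [inv_mul_cancel, mul_one] at h
    exact Std.Symm.symm _ _ h

theorem identityComponent_normal (hR : ∀ k g h, R g h → R (k * g) (k * h))
    (hconj : ∀ k g h, R g h → R (k * g * k⁻¹) (k * h * k⁻¹)) :
    (identityComponent R hR).Normal where
  conj_mem n hn k := by
    have h : ReflTransGen R (k * n * k⁻¹) (k * 1 * k⁻¹) :=
      ReflTransGen.lift (fun g => k * g * k⁻¹) (hconj k) _ _ hn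
    rwa [mul_one, mul_inv_cancel] at h

end Relation

section Confusability

variable {𝕜 G E : Type*} [RCLike 𝕜] [Group G] [NormedAddCommGroup E] [InnerProductSpace 𝕜 E]
  (U : G →* (E ≃ₗᵢ[𝕜] E))

theorem inner_map_map_eq_inner_map_inv_mul (g h : G) (x y : E) :
    ⟪U g x, U h y⟫_𝕜 = ⟪x, U (g⁻¹ * h) y⟫_𝕜 := by
  calc ⟪U g x, U h y⟫_𝕜 = ⟪U g x, U g (U (g⁻¹ * h) y)⟫_𝕜 := by
        rw [← Function.comp_apply (f := U g), ← LinearIsometryEquiv.coe_mul, ← map_mul,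
          mul_inv_cancel_left]
    _ = ⟪x, U (g⁻¹ * h) y⟫_𝕜 := (U g).inner_map_map x _

def Confusable (φ : E) (g h : G) : Prop :=
  ⟪U g φ, U h φ⟫_𝕜 ≠ 0

variable (φ : E)

instance : Std.Symm (Confusable U φ) where
  symm _ _ h := fun h0 => h (inner_eq_zero_symm.mp h0)

theorem confusable_mul_left (k g h : G) (hgh : Confusable U φ g h) :
    Confusable U φ (k * g) (k * h) := by
  unfold Confusable at hgh ⊢
  rwa [inner_map_map_eq_inner_map_inv_mul, mul_inv_rev, mul_assoc, inv_mul_cancel_left,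
    ← inner_map_map_eq_inner_map_inv_mul]

theorem confusable_conj (hclass : ∀ g h : G, ⟪φ, U (h⁻¹ * g * h) φ⟫_𝕜 = ⟪φ, U g φ⟫_𝕜)
    (k g h : G) (hgh : Confusable U φ g h) :
    Confusable U φ (k * g * k⁻¹) (k * h * k⁻¹) := by
  unfold Confusable at hgh ⊢
  have hconj : (k * g * k⁻¹)⁻¹ * (k * h * k⁻¹) = k⁻¹⁻¹ * (g⁻¹ * h) * k⁻¹ := by group
  rwa [inner_map_map_eq_inner_map_inv_mul, hconj, hclass, ← inner_map_map_eq_inner_map_inv_mul]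

end Confusability

theorem confusability_identity_component_normal_of_class_state_general
    {G : Type*} [Group G] {H : Type*} [NormedAddCommGroup H] [InnerProductSpace ℂ H]
    (U : G →* (H ≃ₗᵢ[ℂ] H)) (φ : H)
    (hclass : ∀ g h : G, ⟪φ, U (h⁻¹ * g * h) φ⟫_ℂ = ⟪φ, U g φ⟫_ℂ)
    (Conn : G → G → Prop)
    (hConn : Conn = Relation.ReflTransGen (fun g h : G => ⟪U g φ, U h φ⟫_ℂ ≠ 0)) :
    ∃ K : Subgroup G, K.Normal ∧ (K : Set G) = {h : G | Conn h 1} := by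
  subst hConn
  exact ⟨Relation.identityComponent (Confusable U φ) (confusable_mul_left U φ),
    Relation.identityComponent_normal _ _ (confusable_conj U φ hclass), rfl⟩

/-- For a class state, the identity component of the confusability graph is a
normal subgroup of `G`. -/
theorem confusability_identity_component_normal_of_class_state
    {G : Type*} [Group G] {H : Type*} [NormedAddCommGroup H] [InnerProductSpace ℂ H]
    (U : G →* (H ≃ₗᵢ[ℂ] H)) (φ : H) (hφ : ‖φ‖ = 1)
    (hclass : ∀ g h : G, ⟪φ, U (h⁻¹ * g * h) φ⟫_ℂ = ⟪φ, U g φ⟫_ℂ)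
    (Conn : G → G → Prop)
    (hConn : Conn = Relation.ReflTransGen (fun g h : G => ⟪U g φ, U h φ⟫_ℂ ≠ 0)) :
    ∃ K : Subgroup G, K.Normal ∧ (K : Set G) = {h : G | Conn h 1} :=
  confusability_identity_component_normal_of_class_state_general U φ hclass Conn hConn
end

section
/- Let U be a unitary on H ⊗ H_E and |η⟩ ∈ H_E a unit vector such that U(|φ_x⟩ ⊗ |η⟩) = |φ_x⟩ ⊗ |η_x⟩ for unit vectors |η_x⟩, x ∈ X. Then the map x ↦ |η_x⟩ is constant on each connected component of the confusability graph Γ(X, H, φ). -/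
open scoped InnerProductSpace

/-- If a unitary `U` on `H ⊗ H_E` satisfies `U(|φ_x⟩ ⊗ |η⟩) = |φ_x⟩ ⊗ |η_x⟩` for unit
vectors `|η_x⟩`, then `x ↦ |η_x⟩` is constant on each connected component of the
confusability graph: `x ∼ y` implies `η_x = η_y`. -/
theorem environment_state_constant_on_components
    {X : Type*} {H HE HT : Type*}
    [NormedAddCommGroup H] [InnerProductSpace ℂ H]
    [NormedAddCommGroup HE] [InnerProductSpace ℂ HE]
    [NormedAddCommGroup HT] [InnerProductSpace ℂ HT]
    (t : H →ₗ[ℂ] HE →ₗ[ℂ] HT)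
    (ht : ∀ (a : H) (b : HE) (c : H) (d : HE), ⟪t a b, t c d⟫_ℂ = ⟪a, c⟫_ℂ * ⟪b, d⟫_ℂ)
    (U : HT ≃ₗᵢ[ℂ] HT)
    (φ : X → H) (hφ : ∀ x, ‖φ x‖ = 1)
    (η : HE) (hη : ‖η‖ = 1)
    (ηx : X → HE) (hηx : ∀ x, ‖ηx x‖ = 1)
    (hU : ∀ x, U (t (φ x) η) = t (φ x) (ηx x))
    (Conn : X → X → Prop)
    (hConn : Conn = Relation.ReflTransGen (fun x y : X => ⟪φ x, φ y⟫_ℂ ≠ 0))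
    (x y : X) (hxy : Conn x y) :
    ηx x = ηx y := by
  subst hConn
  induction hxy with
  | refl => rfl
  | tail hab hbc ih =>
    rename_i b c
    rw [ih]
    have key : ⟪U (t (φ b) η), U (t (φ c) η)⟫_ℂ = ⟪t (φ b) η, t (φ c) η⟫_ℂ :=
      U.inner_map_map _ _
    rw [hU, hU, ht, ht] at key
    have hηη : ⟪η, η⟫_ℂ = 1 := by
      rw [inner_self_eq_norm_sq_to_K, hη]; norm_num
    rw [hηη, mul_one] at key
    have hone : ⟪ηx b, ηx c⟫_ℂ = 1 :=
      mul_left_cancel₀ hbc (key.trans (mul_one _).symm)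
    exact (inner_eq_one_iff_of_norm_eq_one (hηx b) (hηx c)).mp hone
end

section
/- Let C be a G-covariant channel with a pure fixed point |φ⟩, admitting a Stinespring dilation C(ρ) = Tr_E[V(ρ ⊗ |η⟩⟨η|)V†]. Then every unit vector |ψ⟩ in any subspace S_k spanned by a connected component of the confusability graph Γ(G, H, U, |φ⟩) satisfies C(|ψ⟩⟨ψ|) = |ψ⟩⟨ψ|. -/
/-!
Covariance carries the pure fixed point `φ` along its orbit, so every `U g φ` is a pure fixed
point. For a pure fixed point `x` the squared weight of `V (x ⊗ η)` on the subspace `x ⊗ H_E` is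
`⟪x, C(|x⟩⟨x|) x⟫ = 1`, so the dilation factorises: `V (x ⊗ η) = x ⊗ χ_x`. Comparing inner
products gives `⟪x, y⟫ ⟪χ_x, χ_y⟫ = ⟪x, y⟫`, hence `χ` is constant along the edges of the
confusability graph and so on each component. By linearity `V (ψ ⊗ η) = ψ ⊗ χ` on all of `S_k`,
and such a `ψ` leaves no trace in the environment: `C(|ψ⟩⟨ψ|) = |ψ⟩⟨ψ|`.
-/

open scoped InnerProductSpace

section General

variable {𝕜 E F : Type*} [RCLike 𝕜] [NormedAddCommGroup E] [InnerProductSpace 𝕜 E]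
  [NormedAddCommGroup F] [InnerProductSpace 𝕜 F]

theorem LinearIsometryEquiv.conj_smulRight_innerSL (W : E ≃ₗᵢ[𝕜] F) (x : E) :
    (W.toLinearIsometry.toContinuousLinearMap).comp
        (((innerSL 𝕜 x).smulRight x).comp W.symm.toLinearIsometry.toContinuousLinearMap) =
      (innerSL 𝕜 (W x)).smulRight (W x) := by
  ext y
  simp [W.inner_map_eq_flip]

theorem LinearIsometry.exists_apply_eq_of_sum_inner_mul_inner_eq_one {ι : Type*} [Fintype ι]
    (T : E →ₗᵢ[𝕜] F) (e : OrthonormalBasis ι 𝕜 E) {w : F} (hw : ‖w‖ = 1)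
    (hsum : ∑ i, ⟪w, T (e i)⟫_𝕜 * ⟪T (e i), w⟫_𝕜 = 1) : ∃ χ, ‖χ‖ = 1 ∧ T χ = w := by
  -- `χ = T† w`, and `hsum` says `‖T† w‖ = ‖w‖`, the equality case of Bessel's inequality.
  set χ := ∑ i, ⟪T (e i), w⟫_𝕜 • e i
  have hχχ : ⟪χ, χ⟫_𝕜 = 1 := by
    rw [e.orthonormal.inner_sum, ← hsum]
    simp
  have hχ : ‖χ‖ = 1 := by
    rw [@norm_eq_sqrt_re_inner 𝕜, hχχ]; simp
  have hTχ : ⟪T χ, w⟫_𝕜 = 1 := by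
    rw [← hsum, map_sum, sum_inner]
    simp [inner_smul_left]
  exact ⟨χ, hχ, (inner_eq_one_iff_of_norm_eq_one (by rw [T.norm_map, hχ]) hw).mp hTχ⟩

end General

section Stinespring

variable {𝕜 H HE HT ι : Type*} [RCLike 𝕜] [Fintype ι]
  [NormedAddCommGroup H] [InnerProductSpace 𝕜 H] [NormedAddCommGroup HE] [InnerProductSpace 𝕜 HE]
  [NormedAddCommGroup HT] [InnerProductSpace 𝕜 HT]
  {t : H →ₗ[𝕜] HE →ₗ[𝕜] HT} {η : HE} {V : HT ≃ₗᵢ[𝕜] HT}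
  {e : OrthonormalBasis ι 𝕜 HE} {C : (H →L[𝕜] H) →ₗ[𝕜] (H →L[𝕜] H)}

theorem apply_tmul_eq_tmul_of_mem_span (W : HT →ₗ[𝕜] HT) {s : Set H} {χ : HE}
    (hs : ∀ x ∈ s, W (t x η) = t x χ) {ψ : H} (hψ : ψ ∈ Submodule.span 𝕜 s) :
    W (t ψ η) = t ψ χ :=
  (Submodule.span_le (p := LinearMap.eqLocus (W ∘ₗ t.flip η) (t.flip χ)) |>.mpr hs) hψ

theorem eq_of_apply_tmul_eq_tmul_of_inner_ne_zero
    (ht : ∀ a b c d, ⟪t a b, t c d⟫_𝕜 = ⟪a, c⟫_𝕜 * ⟪b, d⟫_𝕜) (hη : ‖η‖ = 1) {x y : H}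
    {χ χ' : HE} (hχ : ‖χ‖ = 1) (hχ' : ‖χ'‖ = 1) (hx : V (t x η) = t x χ)
    (hy : V (t y η) = t y χ') (hxy : ⟪x, y⟫_𝕜 ≠ 0) : χ = χ' := by
  have hηη : ⟪η, η⟫_𝕜 = 1 := by simp [inner_self_eq_norm_sq_to_K, hη]
  have : ⟪x, y⟫_𝕜 * ⟪χ, χ'⟫_𝕜 = ⟪x, y⟫_𝕜 * 1 := by
    rw [← ht, ← hx, ← hy, V.inner_map_map, ht, hηη]
  exact (inner_eq_one_iff_of_norm_eq_one hχ hχ').mp (mul_left_cancel₀ hxy this)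

theorem exists_apply_tmul_eq_tmul_of_map_eq
    (ht : ∀ a b c d, ⟪t a b, t c d⟫_𝕜 = ⟪a, c⟫_𝕜 * ⟪b, d⟫_𝕜) (hη : ‖η‖ = 1) {x : H}
    (hdil : ∀ a b : H, ⟪a, C ((innerSL 𝕜 x).smulRight x) b⟫_𝕜 =
      ∑ i, ⟪t a (e i), V (⟪t x η, V.symm (t b (e i))⟫_𝕜 • t x η)⟫_𝕜)
    (hx : ‖x‖ = 1) (hfix : C ((innerSL 𝕜 x).smulRight x) = (innerSL 𝕜 x).smulRight x) :
    ∃ χ, ‖χ‖ = 1 ∧ V (t x η) = t x χ := by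
  have hxx : ⟪x, x⟫_𝕜 = 1 := by simp [inner_self_eq_norm_sq_to_K, hx]
  let T : HE →ₗᵢ[𝕜] HT := (t x).isometryOfInner fun b d => by rw [ht, hxx, one_mul]
  have hsum := hdil x x
  simp_rw [hfix, map_smul, inner_smul_right, ← V.inner_map_eq_flip] at hsum
  obtain ⟨χ, hχ, hTχ⟩ := T.exists_apply_eq_of_sum_inner_mul_inner_eq_one e
    (w := V (t x η)) (by rw [V.norm_map]; exact (T.norm_map η).trans hη)
    (by simpa [T, hx, hxx, inner_smul_right] using hsum.symm)
  exact ⟨χ, hχ, hTχ.symm⟩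

theorem map_smulRight_innerSL_eq_of_apply_tmul_eq_tmul
    (ht : ∀ a b c d, ⟪t a b, t c d⟫_𝕜 = ⟪a, c⟫_𝕜 * ⟪b, d⟫_𝕜) {ψ : H}
    (hdil : ∀ a b : H, ⟪a, C ((innerSL 𝕜 ψ).smulRight ψ) b⟫_𝕜 =
      ∑ i, ⟪t a (e i), V (⟪t ψ η, V.symm (t b (e i))⟫_𝕜 • t ψ η)⟫_𝕜)
    {χ : HE} (hχ : ‖χ‖ = 1) (hV : V (t ψ η) = t ψ χ) :
    C ((innerSL 𝕜 ψ).smulRight ψ) = (innerSL 𝕜 ψ).smulRight ψ := by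
  ext b
  refine ext_inner_left 𝕜 fun a => ?_
  calc ⟪a, C ((innerSL 𝕜 ψ).smulRight ψ) b⟫_𝕜
      = ∑ i, (⟪ψ, b⟫_𝕜 * ⟪a, ψ⟫_𝕜) * (⟪χ, e i⟫_𝕜 * ⟪e i, χ⟫_𝕜) := by
        simp_rw [hdil, map_smul, inner_smul_right, ← V.inner_map_eq_flip, hV, ht]
        congr! 1 with i
        ring
    _ = ⟪a, ((innerSL 𝕜 ψ).smulRight ψ) b⟫_𝕜 := by
        simp [← Finset.mul_sum, e.sum_inner_mul_inner, hχ, inner_smul_right]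

end Stinespring

theorem covariant_channel_decoherence_free_subspaces_general
    {G : Type*} [Group G] {H HE HT : Type*} {ι : Type*} [Fintype ι]
    [NormedAddCommGroup H] [InnerProductSpace ℂ H]
    [NormedAddCommGroup HE] [InnerProductSpace ℂ HE]
    [NormedAddCommGroup HT] [InnerProductSpace ℂ HT]
    (U : G →* (H ≃ₗᵢ[ℂ] H))
    (C : (H →L[ℂ] H) →ₗ[ℂ] (H →L[ℂ] H))
    -- covariance of the channel
    (hcov : ∀ (g : G) (ρ : H →L[ℂ] H),
      C (((U g).toLinearIsometry.toContinuousLinearMap).comp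
          (ρ.comp ((U g).symm.toLinearIsometry.toContinuousLinearMap))) =
        ((U g).toLinearIsometry.toContinuousLinearMap).comp
          ((C ρ).comp ((U g).symm.toLinearIsometry.toContinuousLinearMap)))
    -- pure fixed point
    (φ : H) (hφ : ‖φ‖ = 1)
    (hfix : C ((innerSL ℂ φ).smulRight φ) = (innerSL ℂ φ).smulRight φ)
    -- `t a b` represents the product vector `a ⊗ b` in `H ⊗ H_E`
    (t : H →ₗ[ℂ] HE →ₗ[ℂ] HT)
    (ht : ∀ (a : H) (b : HE) (c : H) (d : HE), ⟪t a b, t c d⟫_ℂ = ⟪a, c⟫_ℂ * ⟪b, d⟫_ℂ)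
    -- Stinespring dilation of `C` with unitary `V` and environment state `η`
    (V : HT ≃ₗᵢ[ℂ] HT) (η : HE) (hη : ‖η‖ = 1)
    (e : OrthonormalBasis ι ℂ HE)
    (hdil : ∀ ψ a b : H,
      ⟪a, C ((innerSL ℂ ψ).smulRight ψ) b⟫_ℂ =
        ∑ i : ι, ⟪t a (e i), V (⟪t ψ η, V.symm (t b (e i))⟫_ℂ • t ψ η)⟫_ℂ)
    -- the connectedness relation of the confusability graph
    (Conn : G → G → Prop)
    (hConn : Conn = Relation.ReflTransGen (fun g h : G => ⟪U g φ, U h φ⟫_ℂ ≠ 0))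
    -- conclusion: every unit vector in a component subspace is preserved
    (g₀ : G) (ψ : H)
    (hψ : ψ ∈ Submodule.span ℂ ((fun g => U g φ) '' {g : G | Conn g₀ g})) :
    C ((innerSL ℂ ψ).smulRight ψ) = (innerSL ℂ ψ).smulRight ψ := by
  have hfix_orbit (g : G) : C ((innerSL ℂ (U g φ)).smulRight (U g φ)) =
      (innerSL ℂ (U g φ)).smulRight (U g φ) := by
    rw [← (U g).conj_smulRight_innerSL, hcov, hfix]
  choose χ hχ hVχ using fun g => exists_apply_tmul_eq_tmul_of_map_eq ht hη (hdil (U g φ))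
    (((U g).norm_map φ).trans hφ) (hfix_orbit g)
  have hχ_component (g : G) (hg : Conn g₀ g) : χ g₀ = χ g := by
    rw [hConn] at hg
    have := hg.lift χ fun a b hab =>
      eq_of_apply_tmul_eq_tmul_of_inner_ne_zero ht hη (hχ a) (hχ b) (hVχ a) (hVχ b) hab
    rwa [Relation.reflTransGen_eq_self] at this
  refine map_smulRight_innerSL_eq_of_apply_tmul_eq_tmul ht (hdil ψ) (hχ g₀) ?_
  refine apply_tmul_eq_tmul_of_mem_span V.toLinearMap ?_ hψ
  rintro _ ⟨g, hg, rfl⟩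
  rw [hχ_component g hg]
  exact hVχ g

/-- **Decoherence free subspaces of covariant channels.**  A `G`-covariant channel
`C` with a pure fixed point `|φ⟩⟨φ|`, given by a Stinespring dilation
`C(ρ) = Tr_E[V(ρ ⊗ |η⟩⟨η|)V†]` (expressed via matrix elements in an orthonormal
basis `e` of the environment), fixes `|ψ⟩⟨ψ|` for every unit vector `ψ` in any
subspace `S_k` spanned by a connected component of the confusability graph
`Γ(G, H, U, |φ⟩)`. -/
theorem covariant_channel_decoherence_free_subspaces
    {G : Type*} [Group G] {H HE HT : Type*} {ι : Type*} [Fintype ι]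
    [NormedAddCommGroup H] [InnerProductSpace ℂ H] [FiniteDimensional ℂ H]
    [NormedAddCommGroup HE] [InnerProductSpace ℂ HE] [FiniteDimensional ℂ HE]
    [NormedAddCommGroup HT] [InnerProductSpace ℂ HT] [FiniteDimensional ℂ HT]
    (U : G →* (H ≃ₗᵢ[ℂ] H))
    (C : (H →L[ℂ] H) →ₗ[ℂ] (H →L[ℂ] H))
    -- covariance of the channel
    (hcov : ∀ (g : G) (ρ : H →L[ℂ] H),
      C (((U g).toLinearIsometry.toContinuousLinearMap).comp
          (ρ.comp ((U g).symm.toLinearIsometry.toContinuousLinearMap))) =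
        ((U g).toLinearIsometry.toContinuousLinearMap).comp
          ((C ρ).comp ((U g).symm.toLinearIsometry.toContinuousLinearMap)))
    -- pure fixed point
    (φ : H) (hφ : ‖φ‖ = 1)
    (hfix : C ((innerSL ℂ φ).smulRight φ) = (innerSL ℂ φ).smulRight φ)
    -- `t a b` represents the product vector `a ⊗ b` in `H ⊗ H_E`
    (t : H →ₗ[ℂ] HE →ₗ[ℂ] HT)
    (ht : ∀ (a : H) (b : HE) (c : H) (d : HE), ⟪t a b, t c d⟫_ℂ = ⟪a, c⟫_ℂ * ⟪b, d⟫_ℂ)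
    (hspan : Submodule.span ℂ {z : HT | ∃ a b, t a b = z} = ⊤)
    -- Stinespring dilation of `C` with unitary `V` and environment state `η`
    (V : HT ≃ₗᵢ[ℂ] HT) (η : HE) (hη : ‖η‖ = 1)
    (e : OrthonormalBasis ι ℂ HE)
    (hdil : ∀ ψ a b : H,
      ⟪a, C ((innerSL ℂ ψ).smulRight ψ) b⟫_ℂ =
        ∑ i : ι, ⟪t a (e i), V (⟪t ψ η, V.symm (t b (e i))⟫_ℂ • t ψ η)⟫_ℂ)
    -- the connectedness relation of the confusability graph
    (Conn : G → G → Prop)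
    (hConn : Conn = Relation.ReflTransGen (fun g h : G => ⟪U g φ, U h φ⟫_ℂ ≠ 0))
    -- conclusion: every unit vector in a component subspace is preserved
    (g₀ : G) (ψ : H)
    (hψ : ψ ∈ Submodule.span ℂ ((fun g => U g φ) '' {g : G | Conn g₀ g}))
    (hψ1 : ‖ψ‖ = 1) :
    C ((innerSL ℂ ψ).smulRight ψ) = (innerSL ℂ ψ).smulRight ψ :=
  covariant_channel_decoherence_free_subspaces_general U C hcov φ hφ hfix t ht V η hη e hdil Conn
    hConn g₀ ψ hψ
end

section
/- Let |φ⟩ = Σ_{n≥0} c_n |n⟩ with c_n ≠ 0 for all n, in a Hilbert space with orthonormal basis {|n⟩}, and let U_t = Σ_n e^{iω_n t}|n⟩⟨n| with pairwise distinct frequencies ω_n. Then for the confusability graph Γ(ℝ, H, U, |φ⟩) (time-translation group), the connected component of 0 is all of ℝ and the spanned subspace S equals the closed span of {|n⟩ : n ≥ 0}, i.e., the whole Hilbert space. -/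
/-! In the eigenbasis, `⟪x, U τ y⟫ = ∑ conj xₙ yₙ e^{iωₙτ}` is an absolutely convergent
exponential series in `τ`. Such a series is continuous, and `⟪U σ φ, U σ φ⟫ = ‖φ‖² ≠ 0`, so each
`σ` is adjacent to every nearby `τ`; connectedness of `ℝ` then connects the whole graph.
If `x` is orthogonal to the trajectory, the series for `⟪x, U τ φ⟫` vanishes identically. As the
frequencies are distinct, its coefficients are recovered as Bohr means
`lim T⁻¹ ∫₀ᵀ e^{-iωₘt} f(t) dt`, so `conj xₙ cₙ = 0` for all `n`, and `cₙ ≠ 0` forces `x = 0`. -/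

open scoped InnerProductSpace ComplexConjugate
open Filter Topology

namespace HilbertBasis

variable {ι 𝕜 E : Type*} [RCLike 𝕜] [NormedAddCommGroup E] [InnerProductSpace 𝕜 E]
  (b : HilbertBasis ι 𝕜 E)

theorem inner_eq_tsum_conj_repr_mul_repr (x y : E) :
    ⟪x, y⟫_𝕜 = ∑' i, conj (b.repr x i) * b.repr y i := by
  simp only [← b.repr.inner_map_map, lp.inner_eq_tsum, RCLike.inner_apply']

theorem summable_norm_conj_repr_mul_repr (x y : E) :
    Summable fun i => ‖conj (b.repr x i) * b.repr y i‖ := by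
  simpa using lp.summable_mul (by norm_num [Real.HolderConjugate.two_two]) (b.repr x) (b.repr y)

theorem repr_map_of_apply_eq_smul (U : E ≃ₗᵢ[𝕜] E) {i : ι} {c : 𝕜} (h : U (b i) = c • b i)
    (x : E) : b.repr (U x) i = c * b.repr x i := by
  have hc : ‖c‖ = 1 := by
    simpa [norm_smul, h, b.orthonormal.1 i] using U.norm_map (b i)
  have hinner : b.repr x i = conj c * b.repr (U x) i := by
    rw [b.repr_apply_apply, b.repr_apply_apply, ← U.inner_map_map, h, inner_smul_left]
  rw [hinner, ← mul_assoc, RCLike.mul_conj, hc]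
  simp

end HilbertBasis

theorem norm_exp_I_mul_ofReal_mul_ofReal (r t : ℝ) :
    ‖Complex.exp (Complex.I * r * t)‖ = 1 := by
  rw [mul_assoc, ← Complex.ofReal_mul, Complex.norm_exp_I_mul_ofReal]

section ExpSeries

open Complex

variable {ι : Type*} {a : ι → ℂ}

theorem continuous_tsum_mul_exp (ha : Summable fun i => ‖a i‖) (ω : ι → ℝ) :
    Continuous fun t : ℝ => ∑' i, a i * exp (I * ω i * t) :=
  continuous_tsum (fun i => by fun_prop) ha fun i t => by
    rw [norm_mul, norm_exp_I_mul_ofReal_mul_ofReal, mul_one]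

theorem norm_inv_mul_integral_exp_le_one (r T : ℝ) :
    ‖T⁻¹ * ∫ t in (0 : ℝ)..T, exp (I * r * t)‖ ≤ 1 := by
  have hint : ‖∫ t in (0 : ℝ)..T, exp (I * r * t)‖ ≤ |T| := by
    simpa using intervalIntegral.norm_integral_le_of_norm_le_const (a := 0) (b := T) (C := 1)
      fun t _ => (norm_exp_I_mul_ofReal_mul_ofReal r t).le
  simp only [norm_mul, Complex.norm_real, Real.norm_eq_abs, abs_inv]
  exact (mul_le_mul_of_nonneg_left hint (by positivity)).trans inv_mul_le_one

theorem tendsto_inv_mul_integral_exp (r : ℝ) :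
    Tendsto (fun T : ℝ => T⁻¹ * ∫ t in (0 : ℝ)..T, exp (I * r * t)) atTop
      (𝓝 (if r = 0 then 1 else 0)) := by
  split_ifs with hr
  · subst hr
    refine tendsto_const_nhds.congr' ?_
    filter_upwards [eventually_ne_atTop 0] with T hT
    simp [hT]
  · have hIr : I * r ≠ 0 := mul_ne_zero I_ne_zero (ofReal_ne_zero.mpr hr)
    have hbound : ∀ T : ℝ, ‖∫ t in (0 : ℝ)..T, exp (I * r * t)‖ ≤ 2 / ‖I * r‖ := fun T => by
      rw [integral_exp_mul_complex hIr, norm_div]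
      gcongr
      refine (norm_sub_le _ _).trans ?_
      norm_num [norm_exp_I_mul_ofReal_mul_ofReal]
    have hlim := tendsto_inv_atTop_zero.mul_const (2 / ‖I * r‖)
    rw [zero_mul] at hlim
    refine squeeze_zero_norm' ?_ hlim
    filter_upwards [eventually_gt_atTop 0] with T hT
    simpa [abs_of_pos hT] using mul_le_mul_of_nonneg_left (hbound T) (inv_nonneg.2 hT.le)

theorem integral_tsum_mul_exp [Countable ι] (ha : Summable fun i => ‖a i‖) (ω : ι → ℝ)
    (T : ℝ) : ∫ t in (0 : ℝ)..T, ∑' i, a i * exp (I * ω i * t) =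
      ∑' i, a i * ∫ t in (0 : ℝ)..T, exp (I * ω i * t) := by
  let f : ι → C(ℝ, ℂ) := fun i => ⟨fun t => a i * exp (I * ω i * t), by fun_prop⟩
  have hf : Summable fun i =>
      ‖(f i).restrict (⟨Set.uIcc 0 T, isCompact_uIcc⟩ : TopologicalSpace.Compacts ℝ)‖ := by
    refine ha.of_nonneg_of_le (fun i => norm_nonneg _) fun i => ?_
    refine (ContinuousMap.norm_le _ (norm_nonneg _)).mpr fun t => ?_
    simp [f, norm_exp_I_mul_ofReal_mul_ofReal]
  simpa [f] using (intervalIntegral.tsum_intervalIntegral_eq_of_summable_norm hf).symm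

theorem tendsto_inv_mul_integral_tsum_mul_exp [Countable ι] (ha : Summable fun i => ‖a i‖)
    (ω : ι → ℝ) :
    Tendsto (fun T : ℝ => T⁻¹ * ∫ t in (0 : ℝ)..T, ∑' i, a i * exp (I * ω i * t)) atTop
      (𝓝 (∑' i, if ω i = 0 then a i else 0)) := by
  have hmean : ∀ T : ℝ, T⁻¹ * ∫ t in (0 : ℝ)..T, ∑' i, a i * exp (I * ω i * t) =
      ∑' i, a i * (T⁻¹ * ∫ t in (0 : ℝ)..T, exp (I * ω i * t)) := fun T => by
    rw [integral_tsum_mul_exp ha, ← tsum_mul_left]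
    simp only [mul_left_comm]
  simp only [hmean]
  refine tendsto_tsum_of_dominated_convergence ha (fun i => ?_) (.of_forall fun T i => ?_)
  · simpa using (tendsto_inv_mul_integral_exp (ω i)).const_mul (a i)
  · simpa using mul_le_mul_of_nonneg_left (norm_inv_mul_integral_exp_le_one (ω i) T)
      (norm_nonneg (a i))

theorem eq_zero_of_tsum_mul_exp_eq_zero [Countable ι] (ha : Summable fun i => ‖a i‖) {ω : ι → ℝ}
    (hω : Function.Injective ω) (h : ∀ t : ℝ, ∑' i, a i * exp (I * ω i * t) = 0) (m : ι) :
    a m = 0 := by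
  have hshift : ∀ t : ℝ, ∑' i, a i * exp (I * ↑(ω i - ω m) * t) = 0 := fun t =>
    calc ∑' i, a i * exp (I * ↑(ω i - ω m) * t)
        = exp (-(I * ω m * t)) * ∑' i, a i * exp (I * ω i * t) := by
          rw [← tsum_mul_left]
          congr 1 with i
          rw [mul_left_comm, ← exp_add]
          push_cast
          ring_nf
      _ = 0 := by rw [h t, mul_zero]
  have hlim := tendsto_inv_mul_integral_tsum_mul_exp ha fun i => ω i - ω m
  simp only [hshift, intervalIntegral.integral_zero, mul_zero] at hlim
  rw [tsum_eq_single m fun i hi => if_neg (sub_ne_zero.2 (hω.ne hi)), if_pos (sub_self _)] at hlim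
  exact tendsto_nhds_unique hlim tendsto_const_nhds

end ExpSeries

namespace HilbertBasis

variable {ι H : Type*} [NormedAddCommGroup H] [InnerProductSpace ℂ H] (b : HilbertBasis ι ℂ H)
  {ω : ι → ℝ} {U : ℝ → H ≃ₗᵢ[ℂ] H}

theorem inner_map_eq_tsum_mul_exp
    (hU : ∀ (τ : ℝ) (i : ι), U τ (b i) = Complex.exp (Complex.I * (ω i : ℂ) * (τ : ℂ)) • b i)
    (x y : H) (τ : ℝ) :
    ⟪x, U τ y⟫_ℂ = ∑' i, conj (b.repr x i) * b.repr y i * Complex.exp (Complex.I * ω i * τ) := by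
  rw [b.inner_eq_tsum_conj_repr_mul_repr]
  congr 1 with i
  rw [b.repr_map_of_apply_eq_smul _ (hU τ i)]
  ring

theorem continuous_inner_map
    (hU : ∀ (τ : ℝ) (i : ι), U τ (b i) = Complex.exp (Complex.I * (ω i : ℂ) * (τ : ℂ)) • b i)
    (x y : H) : Continuous fun τ : ℝ => ⟪x, U τ y⟫_ℂ := by
  simp_rw [b.inner_map_eq_tsum_mul_exp hU]
  exact continuous_tsum_mul_exp (b.summable_norm_conj_repr_mul_repr x y) ω

end HilbertBasis

theorem time_translation_confusability_connected_general
    {H : Type*} [NormedAddCommGroup H] [InnerProductSpace ℂ H] [CompleteSpace H]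
    (b : HilbertBasis ℕ ℂ H)
    (ω : ℕ → ℝ) (hω : Function.Injective ω)
    (U : ℝ → (H ≃ₗᵢ[ℂ] H))
    (hU : ∀ (τ : ℝ) (n : ℕ),
      U τ (b n) = Complex.exp (Complex.I * (ω n : ℂ) * (τ : ℂ)) • b n)
    (φ : H) (hc : ∀ n, b.repr φ n ≠ 0)
    (Conn : ℝ → ℝ → Prop)
    (hConn : Conn = Relation.ReflTransGen (fun σ τ : ℝ => ⟪U σ φ, U τ φ⟫_ℂ ≠ 0)) :
    {τ : ℝ | Conn 0 τ} = Set.univ ∧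
      (Submodule.span ℂ (Set.range fun τ : ℝ => U τ φ)).topologicalClosure = ⊤ := by
  constructor
  · have hφ : φ ≠ 0 := fun h => hc 0 (by simp [h])
    have hnear : ∀ σ, ∀ᶠ τ in 𝓝 σ, ⟪U σ φ, U τ φ⟫_ℂ ≠ 0 := fun σ =>
      (b.continuous_inner_map hU _ φ).continuousAt.eventually_ne (by simpa using hφ)
    subst hConn
    refine Set.eq_univ_of_forall fun τ => PreconnectedSpace.induction₂' _ (fun σ => ?_)
      ⟨fun _ _ _ => Relation.ReflTransGen.trans⟩ 0 τ
    filter_upwards [hnear σ] with τ hστ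
    exact ⟨.single hστ, .single (by rwa [← inner_conj_symm, map_ne_zero])⟩
  · rw [Submodule.topologicalClosure_eq_top_iff, Submodule.eq_bot_iff]
    intro x hx
    have horth : ∀ τ : ℝ, ⟪x, U τ φ⟫_ℂ = 0 := fun τ =>
      (Submodule.mem_orthogonal' _ x).mp hx _ (Submodule.subset_span ⟨τ, rfl⟩)
    have hcoeff : ∀ n, conj (b.repr x n) * b.repr φ n = 0 :=
      eq_zero_of_tsum_mul_exp_eq_zero (b.summable_norm_conj_repr_mul_repr x φ) hω fun τ => by
        rw [← b.inner_map_eq_tsum_mul_exp hU, horth]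
    refine b.repr.injective (lp.ext (funext fun n => ?_))
    simpa [hc n] using hcoeff n

/-- For the time-translation representation `U_t|n⟩ = e^{iω_n t}|n⟩` (with pairwise
distinct frequencies) and a state `|φ⟩ = Σ c_n|n⟩` with all `c_n ≠ 0`, the
confusability graph on `ℝ` is connected (the component of `0` is all of `ℝ`) and the
closed span of the trajectory `{U_t|φ⟩ : t ∈ ℝ}` is the whole Hilbert space. -/
theorem time_translation_confusability_connected
    {H : Type*} [NormedAddCommGroup H] [InnerProductSpace ℂ H] [CompleteSpace H]
    (b : HilbertBasis ℕ ℂ H)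
    (ω : ℕ → ℝ) (hω : Function.Injective ω)
    (U : ℝ → (H ≃ₗᵢ[ℂ] H))
    (hU : ∀ (τ : ℝ) (n : ℕ),
      U τ (b n) = Complex.exp (Complex.I * (ω n : ℂ) * (τ : ℂ)) • b n)
    (φ : H) (hφ : ‖φ‖ = 1) (hc : ∀ n, b.repr φ n ≠ 0)
    (Conn : ℝ → ℝ → Prop)
    (hConn : Conn = Relation.ReflTransGen (fun σ τ : ℝ => ⟪U σ φ, U τ φ⟫_ℂ ≠ 0)) :
    {τ : ℝ | Conn 0 τ} = Set.univ ∧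
      (Submodule.span ℂ (Set.range fun τ : ℝ => U τ φ)).topologicalClosure = ⊤ :=
  time_translation_confusability_connected_general b ω hω U hU φ hc Conn hConn
end
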